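/- Let K : 𝔻² → ℝ and h : 𝕊¹ → ℝ be continuous. A function u solves −Δu = 2K e^u in 𝔻², ∂u/∂η + 2 = 2h e^{u/2} on 𝕊¹ if and only if, setting ρ = ∫_{𝔻²} K e^u, the pair (u, ρ) solves the system: −Δu = 2ρ K e^u / ∫_{𝔻²} K e^u in 𝔻², ∂u/∂η + 2 = 2(2π−ρ) h e^{u/2} / ∫_{𝕊¹} h e^{u/2} on 𝕊¹, and (2π−ρ)²/ρ = (∫_{𝕊¹} h e^{u/2})² / ∫_{𝔻²} K e^u with 0 < ρ < 2π. Conversely, if (u, ρ) with u ∈ 𝕏 solves this system, then u + C solves the original problem, where C = log ρ − log ∫_{𝔻²} K e^u. -/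

import Mathlib

open MeasureTheory Metric Filter Set
open scoped Real NNReal Topology

noncomputable section

/-- The closed unit disk `𝔻² ⊆ ℝ²`, identified with a subset of `ℂ`. -/
def Disk : Set ℂ := Metric.closedBall 0 1

/-- The unit circle `𝕊¹ = ∂𝔻²`. -/
def Circ : Set ℂ := Metric.sphere 0 1

/-- Arc-length measure on curves in `ℝ² ≅ ℂ`: the 1-dimensional Hausdorff measure. -/
def arcLength : Measure ℂ := μH[1]

/-- The Euclidean Laplacian of `u : ℂ → ℝ`: the sum of the second derivatives in the two
orthonormal directions `1` and `I`. -/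
def laplacian (u : ℂ → ℝ) (x : ℂ) : ℝ :=
  fderiv ℝ (fun y => fderiv ℝ u y 1) x 1 +
    fderiv ℝ (fun y => fderiv ℝ u y Complex.I) x Complex.I

/-- `u` is a (classical) solution of `−Δu = 2 K e^u` in `𝔻²`,
`∂u/∂η + 2 = 2 h e^{u/2}` on `𝕊¹` (the outward unit normal at `x ∈ 𝕊¹` is `x` itself;
`u` is taken to be `C²`, extended to the plane). -/
def SolvesPrescribed (K h u : ℂ → ℝ) : Prop :=
  ContDiff ℝ 2 u ∧
  (∀ x ∈ Disk, -laplacian u x = 2 * K x * Real.exp (u x)) ∧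
  (∀ x ∈ Circ, fderiv ℝ u x x + 2 = 2 * h x * Real.exp (u x / 2))

/-- `u` belongs to the set `𝕏`: both curvature integrals are positive. -/
def MemX (K h u : ℂ → ℝ) : Prop :=
  0 < (∫ x in Disk, K x * Real.exp (u x)) ∧
    0 < ∫ x in Circ, h x * Real.exp (u x / 2) ∂arcLength

/-- `(u, ρ)` solves the reformulated system (1.4). -/
def SolvesSystem (K h u : ℂ → ℝ) (ρ : ℝ) : Prop :=
  ContDiff ℝ 2 u ∧
  (∀ x ∈ Disk, -laplacian u x =
      2 * ρ * (K x * Real.exp (u x)) / ∫ y in Disk, K y * Real.exp (u y)) ∧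
  (∀ x ∈ Circ, fderiv ℝ u x x + 2 =
      2 * (2 * π - ρ) * (h x * Real.exp (u x / 2)) /
        ∫ y in Circ, h y * Real.exp (u y / 2) ∂arcLength) ∧
  ((2 * π - ρ) ^ 2 / ρ =
      (∫ y in Circ, h y * Real.exp (u y / 2) ∂arcLength) ^ 2 /
        ∫ y in Disk, K y * Real.exp (u y)) ∧
  0 < ρ ∧ ρ < 2 * π

/-!
Integrating `−Δu = 2Ke^u` over the disk, the divergence theorem and the boundary condition give
the Gauss–Bonnet identity `∫_{𝕊¹} h e^{u/2} = 2π − ∫_{𝔻²} K e^u`. With it the two systems say the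
same thing: for `u + C` the multipliers become `ρ/A = e^C` and `(2π − ρ)/B = e^{C/2}`, which is
exactly what the constraint `(2π − ρ)²/ρ = B²/A` allows (`A`, `B` the two integrals).

The divergence theorem on the disk is the one on the rectangle `[0, 1] × [−π, π]` in polar
coordinates, where `r Δu = ∂_r (r ∂_r u) + ∂_θ (r⁻¹ ∂_θ u)`. Arc length `μH[1]` on the circle is
computed by pulling it back to `ℝ/2πℤ`: the pull-back is a finite rotation-invariant measure,
hence `c` times Lebesgue measure, and `c = 1` because the circle has length at most `2π`
(Lipschitz parametrization) while an arc of angle `2α` is at least as long as its chord `2 sin α`.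
-/

open Complex (I)

instance : Fact (0 < 2 * π) := ⟨Real.two_pi_pos⟩

def angleToCirc (θ : AddCircle (2 * π)) : ℂ := AddCircle.homeomorphCircle' θ

@[simp] lemma angleToCirc_coe (θ : ℝ) : angleToCirc θ = circleMap 0 1 θ := by
  simp [angleToCirc, AddCircle.homeomorphCircle'_apply_mk, circleMap]

lemma norm_angleToCirc (θ : AddCircle (2 * π)) : ‖angleToCirc θ‖ = 1 := Circle.norm_coe _

lemma continuous_angleToCirc : Continuous angleToCirc :=
  continuous_subtype_val.comp AddCircle.homeomorphCircle'.continuous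

lemma injective_angleToCirc : Function.Injective angleToCirc :=
  Subtype.val_injective.comp AddCircle.homeomorphCircle'.injective

lemma range_angleToCirc : Set.range angleToCirc = Circ := by
  ext z
  constructor
  · rintro ⟨θ, rfl⟩
    simp [Circ, angleToCirc, Circle.norm_coe]
  · intro hz
    exact ⟨_, congrArg Subtype.val (AddCircle.homeomorphCircle'.apply_symm_apply ⟨z, hz⟩)⟩

lemma measurableEmbedding_angleToCirc : MeasurableEmbedding angleToCirc :=
  (continuous_angleToCirc.isClosedEmbedding injective_angleToCirc).measurableEmbedding

lemma angleToCirc_add (a b : AddCircle (2 * π)) :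
    angleToCirc (a + b) = angleToCirc a * angleToCirc b := by
  induction a using QuotientAddGroup.induction_on
  induction b using QuotientAddGroup.induction_on
  rw [← AddCircle.coe_add]
  simp only [angleToCirc_coe, circleMap_zero_mul, mul_one]

lemma arcLength_image_mul {w : ℂ} (hw : ‖w‖ = 1) (s : Set ℂ) :
    arcLength ((w * ·) '' s) = arcLength s := by
  refine (Isometry.hausdorffMeasure_image ?_ (Or.inl zero_le_one) s)
  exact Isometry.of_dist_eq fun x y => by simp [dist_eq_norm, ← mul_sub, hw]

lemma arcLength_circ_le : arcLength Circ ≤ ENNReal.ofReal (2 * π) := by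
  have h := (lipschitzWith_circleMap 0 1).hausdorffMeasure_image_le zero_le_one (Ioc 0 (2 * π))
  rw [image_circleMap_Ioc, abs_one, hausdorffMeasure_real, Real.volume_Ioc] at h
  simpa [arcLength, Circ] using h

lemma comap_arcLength_isAddLeftInvariant :
    (arcLength.comap angleToCirc).IsAddLeftInvariant := by
  refine (forall_measure_preimage_add_iff _).1 fun g A hA => ?_
  have hpre : (g + ·) ⁻¹' A = (-g + ·) '' A := by rw [image_add_left, neg_neg]
  rw [measurableEmbedding_angleToCirc.comap_apply, measurableEmbedding_angleToCirc.comap_apply,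
    hpre, image_image]
  simp_rw [angleToCirc_add]
  rw [← image_image (angleToCirc (-g) * ·) angleToCirc, arcLength_image_mul]
  exact norm_angleToCirc (-g)

lemma comap_arcLength_univ : arcLength.comap angleToCirc univ = arcLength Circ := by
  rw [measurableEmbedding_angleToCirc.comap_apply, image_univ, range_angleToCirc]

instance : IsFiniteMeasure (arcLength.comap angleToCirc) :=
  ⟨comap_arcLength_univ ▸ arcLength_circ_le.trans_lt ENNReal.ofReal_lt_top⟩

lemma lipschitzWith_im : LipschitzWith 1 Complex.im :=
  .of_dist_le_mul fun x y => by
    simpa [Complex.dist_eq, Real.dist_eq] using Complex.abs_im_le_norm (x - y)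

lemma two_sin_le_comap_arcLength_closedBall {α : ℝ} (hα₀ : 0 ≤ α) (hα : α ≤ π / 2) :
    ENNReal.ofReal (2 * Real.sin α) ≤ arcLength.comap angleToCirc (closedBall 0 α) := by
  have hsub : Icc (-Real.sin α) (Real.sin α) ⊆ Complex.im '' (angleToCirc '' closedBall 0 α) := by
    intro y hy
    have hsin : Real.sin α ≤ 1 := Real.sin_le_one α
    have hy' : y ∈ Icc (-1 : ℝ) 1 := ⟨by linarith [hy.1], hy.2.trans hsin⟩
    have harcsin : |Real.arcsin y| ≤ α := by
      have hα' : Real.arcsin (Real.sin α) = α := Real.arcsin_sin (by linarith [Real.pi_pos]) hα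
      refine abs_le.2 ⟨?_, hα' ▸ Real.monotone_arcsin hy.2⟩
      calc -α = Real.arcsin (-Real.sin α) := by rw [Real.arcsin_neg, hα']
        _ ≤ Real.arcsin y := Real.monotone_arcsin hy.1
    refine ⟨angleToCirc (Real.arcsin y), ⟨Real.arcsin y, ?_, rfl⟩, ?_⟩
    · rw [mem_closedBall_zero_iff, AddCircle.norm_coe_eq_abs_iff _ Real.two_pi_pos.ne'|>.2]
      · exact harcsin
      · rw [abs_of_pos Real.two_pi_pos]; linarith
    · simp [circleMap_zero_im, Real.sin_arcsin hy'.1 hy'.2]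
  calc ENNReal.ofReal (2 * Real.sin α) = μH[1] (Icc (-Real.sin α) (Real.sin α)) := by
        rw [hausdorffMeasure_real, Real.volume_Icc]; ring_nf
    _ ≤ μH[1] (Complex.im '' (angleToCirc '' closedBall 0 α)) := measure_mono hsub
    _ ≤ arcLength.comap angleToCirc (closedBall 0 α) := by
        rw [measurableEmbedding_angleToCirc.comap_apply]
        simpa [arcLength] using lipschitzWith_im.hausdorffMeasure_image_le zero_le_one
          (angleToCirc '' closedBall 0 α)

lemma comap_arcLength_eq_volume : arcLength.comap angleToCirc = volume := by
  have := comap_arcLength_isAddLeftInvariant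
  set c := Measure.addHaarScalarFactor (arcLength.comap angleToCirc) volume
  have hc : arcLength.comap angleToCirc = c • volume := Measure.isAddLeftInvariant_eq_smul _ _
  have hle : (c : ℝ) ≤ 1 := by
    have h := comap_arcLength_univ ▸ arcLength_circ_le
    rw [hc, Measure.smul_apply, AddCircle.measure_univ, ENNReal.smul_def, smul_eq_mul,
      ← ENNReal.ofReal_coe_nnreal, ← ENNReal.ofReal_mul c.coe_nonneg,
      ENNReal.ofReal_le_ofReal_iff Real.two_pi_pos.le] at h
    nlinarith [Real.two_pi_pos]
  have hsin : ∀ α, 0 < α → α ≤ π / 2 → Real.sin α ≤ c * α := by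
    intro α hα₀ hα
    have h := two_sin_le_comap_arcLength_closedBall hα₀.le hα
    rw [hc, Measure.smul_apply, AddCircle.volume_closedBall, min_eq_right (by linarith),
      ENNReal.smul_def, smul_eq_mul, ← ENNReal.ofReal_coe_nnreal, ← ENNReal.ofReal_mul c.coe_nonneg,
      ENNReal.ofReal_le_ofReal_iff (by positivity)] at h
    linarith
  have hge : 1 ≤ (c : ℝ) := by
    refine le_of_forall_sub_le fun ε hε => ?_
    set α := min 1 ε
    have hα₀ : 0 < α := lt_min one_pos hε
    have hα₁ : α ≤ 1 := min_le_left _ _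
    have h := (Real.sin_gt_sub_cube hα₀).trans_le (hsin α hα₀ (by linarith [Real.pi_gt_three]))
    have hcube : α ^ 3 ≤ α * ε := by
      nlinarith [min_le_right 1 ε, mul_le_mul hα₁ hα₁ hα₀.le zero_le_one]
    nlinarith
  rw [hc, show c = 1 from NNReal.coe_injective (le_antisymm hle hge), one_smul]

lemma integral_circ_eq_intervalIntegral {E : Type*} [NormedAddCommGroup E] [NormedSpace ℝ E]
    (g : ℂ → E) : ∫ z in Circ, g z ∂arcLength = ∫ θ in -π..π, g (circleMap 0 1 θ) := by
  rw [← range_angleToCirc, ← measurableEmbedding_angleToCirc.map_comap,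
    measurableEmbedding_angleToCirc.integral_map, comap_arcLength_eq_volume,
    ← AddCircle.intervalIntegral_preimage (2 * π) (-π)]
  simp only [angleToCirc_coe, show -π + 2 * π = π by ring]

lemma polarCoord_symm_eq_circleMap (p : ℝ × ℝ) :
    Complex.polarCoord.symm p = circleMap 0 p.1 p.2 := by
  simp [circleMap, Complex.exp_mul_I]

lemma integral_closedBall_eq_polar {f : ℂ → ℝ} {R : ℝ} (hR : 0 ≤ R)
    (hf : ContinuousOn f (closedBall 0 R)) :
    ∫ x in closedBall 0 R, f x = ∫ r in 0..R, ∫ θ in -π..π, r * f (circleMap 0 r θ) := by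
  have hpolar : ∀ p ∈ polarCoord.target, p.1 • (closedBall 0 R).indicator f
      (Complex.polarCoord.symm p) = (Ioc 0 R ×ˢ Ioo (-π) π).indicator
        (fun p => p.1 * f (circleMap 0 p.1 p.2)) p := by
    rintro ⟨r, θ⟩ ⟨hr, hθ⟩
    have hr : 0 < r := hr
    by_cases hrR : r ≤ R
    · rw [indicator_of_mem, indicator_of_mem, polarCoord_symm_eq_circleMap, smul_eq_mul]
      · exact ⟨⟨hr, hrR⟩, hθ⟩
      · simp [abs_of_pos hr, hrR]
    · rw [indicator_of_notMem, indicator_of_notMem, smul_zero]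
      · exact fun h => hrR h.1.2
      · simp [abs_of_pos hr, hrR]
  have hint : IntegrableOn (fun p : ℝ × ℝ => p.1 * f (circleMap 0 p.1 p.2))
      (Ioc 0 R ×ˢ Ioo (-π) π) := by
    refine (ContinuousOn.integrableOn_compact (isCompact_Icc.prod isCompact_Icc) ?_).mono_set
      (prod_mono Ioc_subset_Icc_self Ioo_subset_Icc_self)
    refine continuousOn_fst.mul (hf.comp (by fun_prop) ?_)
    rintro ⟨r, θ⟩ ⟨hr, -⟩
    simpa [abs_of_nonneg hr.1] using hr.2
  rw [← integral_indicator measurableSet_closedBall, ← Complex.integral_comp_polarCoord_symm,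
    setIntegral_congr_fun polarCoord.open_target.measurableSet hpolar,
    setIntegral_indicator (measurableSet_Ioc.prod measurableSet_Ioo),
    inter_eq_right.2 (show Ioc 0 R ×ˢ Ioo (-π) π ⊆ polarCoord.target from
      prod_mono Ioc_subset_Ioi_self subset_rfl), Measure.volume_eq_prod, setIntegral_prod _ hint,
    intervalIntegral.integral_of_le hR]
  simp_rw [intervalIntegral.integral_of_le (neg_le_self Real.pi_pos.le),
    integral_Ioc_eq_integral_Ioo]

lemma circleMap_zero_eq_smul (r θ : ℝ) : circleMap 0 r θ = r • circleMap 0 1 θ := by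
  simp [circleMap, Complex.real_smul]

lemma hasDerivAt_circleMap_radius (r θ : ℝ) :
    HasDerivAt (fun r : ℝ => circleMap 0 r θ) (circleMap 0 1 θ) r := by
  rw [show (fun r : ℝ => circleMap 0 r θ) = fun r => r • circleMap 0 1 θ from
    funext fun r => circleMap_zero_eq_smul r θ]
  simpa using (hasDerivAt_id r).smul_const (circleMap 0 1 θ)

lemma differentiable_circleMap_polar : Differentiable ℝ fun p : ℝ × ℝ => circleMap 0 p.1 p.2 := by
  unfold circleMap; fun_prop

lemma differentiable_circleMap_snd : Differentiable ℝ fun p : ℝ × ℝ => circleMap 0 1 p.2 := by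
  unfold circleMap; fun_prop

lemma fderiv_apply_one_zero_of_hasDerivAt {F : ℝ × ℝ → ℝ} {p : ℝ × ℝ} {a : ℝ}
    (hF : DifferentiableAt ℝ F p) (ha : HasDerivAt (fun r => F (r, p.2)) a p.1) :
    fderiv ℝ F p (1, 0) = a :=
  (hF.hasFDerivAt.comp_hasDerivAt p.1
    ((hasDerivAt_id p.1).prodMk (hasDerivAt_const p.1 p.2))).unique ha

lemma fderiv_apply_zero_one_of_hasDerivAt {F : ℝ × ℝ → ℝ} {p : ℝ × ℝ} {a : ℝ}
    (hF : DifferentiableAt ℝ F p) (ha : HasDerivAt (fun θ => F (p.1, θ)) a p.2) :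
    fderiv ℝ F p (0, 1) = a :=
  (hF.hasFDerivAt.comp_hasDerivAt p.2
    ((hasDerivAt_const p.2 p.1).prodMk (hasDerivAt_id p.2))).unique ha

lemma fderiv_fderiv_apply_eq {u : ℂ → ℝ} {x : ℂ} (hu : DifferentiableAt ℝ (fderiv ℝ u) x)
    (v w : ℂ) : fderiv ℝ (fun y => fderiv ℝ u y v) x w = fderiv ℝ (fderiv ℝ u) x w v := by
  rw [fderiv_clm_apply hu (differentiableAt_const v)]
  simp

lemma laplacian_eq_fderiv_fderiv {u : ℂ → ℝ} {x : ℂ} (hu : DifferentiableAt ℝ (fderiv ℝ u) x) :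
    laplacian u x = fderiv ℝ (fderiv ℝ u) x 1 1 + fderiv ℝ (fderiv ℝ u) x I I := by
  rw [laplacian, fderiv_fderiv_apply_eq hu, fderiv_fderiv_apply_eq hu]

lemma continuous_laplacian {u : ℂ → ℝ} (hu : ContDiff ℝ 2 u) : Continuous (laplacian u) := by
  have hu' : ContDiff ℝ 1 (fderiv ℝ u) := hu.fderiv_right (by norm_num)
  have hD2 := hu'.continuous_fderiv one_ne_zero
  rw [show laplacian u = fun x => fderiv ℝ (fderiv ℝ u) x 1 1 + fderiv ℝ (fderiv ℝ u) x I I from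
    funext fun x => laplacian_eq_fderiv_fderiv (hu'.differentiable one_ne_zero x)]
  fun_prop

lemma laplacian_add_const (u : ℂ → ℝ) (c : ℝ) : laplacian (fun x => u x + c) = laplacian u := by
  funext x
  simp only [laplacian, fderiv_add_const]

lemma bilinear_diag_add_diag_mul_I {N : ℂ →L[ℝ] ℂ →L[ℝ] ℝ} {w : ℂ} (hw : ‖w‖ = 1) :
    N w w + N (w * I) (w * I) = N 1 1 + N I I := by
  have hnorm := Complex.sq_norm w
  rw [hw, Complex.normSq_apply] at hnorm
  obtain ⟨a, b, rfl, hab⟩ : ∃ a b : ℝ, w = a • (1 : ℂ) + b • I ∧ a ^ 2 + b ^ 2 = 1 :=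
    ⟨w.re, w.im, by simp, by linarith⟩
  have hwI : (a • (1 : ℂ) + b • I) * I = (-b) • (1 : ℂ) + a • I := by
    simp [Complex.ext_iff]
  rw [hwI]
  simp only [map_add, map_smul, add_apply, FunLike.coe_smul, Pi.smul_apply, smul_eq_mul]
  linear_combination (N 1 1 + N I I) * hab

/-- `r ∂_r u` at `x = r e^{iθ}`; `angularFlux` is `r⁻¹ ∂_θ u`. -/
def radialFlux (u : ℂ → ℝ) (p : ℝ × ℝ) : ℝ :=
  p.1 * fderiv ℝ u (circleMap 0 p.1 p.2) (circleMap 0 1 p.2)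

def angularFlux (u : ℂ → ℝ) (p : ℝ × ℝ) : ℝ :=
  fderiv ℝ u (circleMap 0 p.1 p.2) (circleMap 0 1 p.2 * I)

section Flux

variable {u : ℂ → ℝ} (hu : Differentiable ℝ (fderiv ℝ u))
include hu

lemma hasDerivAt_radialFlux (r θ : ℝ) :
    HasDerivAt (fun r => radialFlux u (r, θ))
      (fderiv ℝ u (circleMap 0 r θ) (circleMap 0 1 θ) +
        r * fderiv ℝ (fderiv ℝ u) (circleMap 0 r θ) (circleMap 0 1 θ) (circleMap 0 1 θ)) r := by
  have h := (hasDerivAt_id' r).mul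
    (((hu _).hasFDerivAt.comp_hasDerivAt r (hasDerivAt_circleMap_radius r θ)).clm_apply
      (hasDerivAt_const r (circleMap 0 1 θ)))
  refine h.congr_deriv ?_
  simp

lemma hasDerivAt_angularFlux (r θ : ℝ) :
    HasDerivAt (fun θ => angularFlux u (r, θ))
      (r * fderiv ℝ (fderiv ℝ u) (circleMap 0 r θ) (circleMap 0 1 θ * I) (circleMap 0 1 θ * I) -
        fderiv ℝ u (circleMap 0 r θ) (circleMap 0 1 θ)) θ := by
  have h := ((hu _).hasFDerivAt.comp_hasDerivAt θ (hasDerivAt_circleMap 0 r θ)).clm_apply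
    ((hasDerivAt_circleMap 0 1 θ).mul_const I)
  refine h.congr_deriv ?_
  have hxI : circleMap 0 r θ * I = r • (circleMap 0 1 θ * I) := by
    rw [circleMap_zero_eq_smul r θ, smul_mul_assoc]
  have hII : circleMap 0 1 θ * I * I = -circleMap 0 1 θ := by
    rw [mul_assoc, Complex.I_mul_I, mul_neg_one]
  simp only [Function.comp_apply, hxI, hII, map_smul, map_neg, smul_apply, smul_eq_mul]
  ring

lemma differentiable_radialFlux : Differentiable ℝ (radialFlux u) :=
  differentiable_fst.mul ((hu.comp differentiable_circleMap_polar).clm_apply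
    differentiable_circleMap_snd)

lemma differentiable_angularFlux : Differentiable ℝ (angularFlux u) :=
  (hu.comp differentiable_circleMap_polar).clm_apply
    (differentiable_circleMap_snd.mul_const I)

lemma fderiv_radialFlux_add_fderiv_angularFlux (r θ : ℝ) :
    fderiv ℝ (radialFlux u) (r, θ) (1, 0) + fderiv ℝ (angularFlux u) (r, θ) (0, 1) =
      r * laplacian u (circleMap 0 r θ) := by
  have h1 := fderiv_apply_one_zero_of_hasDerivAt (differentiable_radialFlux hu (r, θ))
      (hasDerivAt_radialFlux hu r θ)
  have h2 := fderiv_apply_zero_one_of_hasDerivAt (differentiable_angularFlux hu (r, θ))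
      (hasDerivAt_angularFlux hu r θ)
  have h3 := bilinear_diag_add_diag_mul_I (N := fderiv ℝ (fderiv ℝ u) (circleMap 0 r θ))
    (w := circleMap 0 1 θ) (by simp)
  rw [h1, h2, laplacian_eq_fderiv_fderiv (hu _), ← h3]
  ring

end Flux

theorem integral_closedBall_laplacian {u : ℂ → ℝ} (hu : ContDiff ℝ 2 u) {R : ℝ} (hR : 0 ≤ R) :
    ∫ x in closedBall 0 R, laplacian u x =
      ∫ θ in -π..π, R * fderiv ℝ u (circleMap 0 R θ) (circleMap 0 1 θ) := by
  have hu' : Differentiable ℝ (fderiv ℝ u) :=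
    (hu.fderiv_right (m := 1) (by norm_num)).differentiable one_ne_zero
  have hdiv := integral2_divergence_prod_of_hasFDerivAt (radialFlux u) (angularFlux u)
    (fderiv ℝ (radialFlux u)) (fderiv ℝ (angularFlux u)) 0 (-π) R π
    (differentiable_radialFlux hu').continuous.continuousOn
    (differentiable_angularFlux hu').continuous.continuousOn
    (fun p _ => (differentiable_radialFlux hu' p).hasFDerivAt)
    (fun p _ => (differentiable_angularFlux hu' p).hasFDerivAt) ?_
  · have hperiodic : ∀ r, angularFlux u (r, π) = angularFlux u (r, -π) := fun r => by
      have h : ∀ ρ, circleMap 0 ρ π = circleMap 0 ρ (-π) := fun ρ => by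
        simpa [show -π + 2 * π = π by ring] using periodic_circleMap 0 ρ (-π)
      simp only [angularFlux, h]
    simp only [fderiv_radialFlux_add_fderiv_angularFlux hu', hperiodic, sub_self, zero_add] at hdiv
    rw [integral_closedBall_eq_polar hR (continuous_laplacian hu).continuousOn, hdiv]
    simp [radialFlux]
  · rw [show (fun p : ℝ × ℝ => fderiv ℝ (radialFlux u) p (1, 0) + fderiv ℝ (angularFlux u) p (0, 1))
        = fun p => p.1 * laplacian u (circleMap 0 p.1 p.2) from
      funext fun p => fderiv_radialFlux_add_fderiv_angularFlux hu' p.1 p.2]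
    exact (continuous_fst.mul ((continuous_laplacian hu).comp
      differentiable_circleMap_polar.continuous)).continuousOn.integrableOn_compact
      (isCompact_uIcc.prod isCompact_uIcc)

section Curvature

variable {K h u : ℂ → ℝ}

theorem SolvesPrescribed.integral_boundary_eq (hs : SolvesPrescribed K h u) :
    ∫ x in Circ, h x * Real.exp (u x / 2) ∂arcLength =
      2 * π - ∫ x in Disk, K x * Real.exp (u x) := by
  obtain ⟨hu, hd, hb⟩ := hs
  have hdisk : ∫ x in Disk, laplacian u x = -(2 * ∫ x in Disk, K x * Real.exp (u x)) := by
    rw [← integral_const_mul, ← integral_neg]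
    refine setIntegral_congr_fun measurableSet_closedBall fun x hx => ?_
    rw [← neg_eq_iff_eq_neg, hd x hx, mul_assoc]
  have hcont : Continuous fun θ => fderiv ℝ u (circleMap 0 1 θ) (circleMap 0 1 θ) :=
    ((hu.continuous_fderiv two_ne_zero).comp (continuous_circleMap 0 1)).clm_apply
      (continuous_circleMap 0 1)
  calc ∫ x in Circ, h x * Real.exp (u x / 2) ∂arcLength
      = ∫ θ in -π..π, (fderiv ℝ u (circleMap 0 1 θ) (circleMap 0 1 θ) + 2) / 2 := by
        rw [integral_circ_eq_intervalIntegral]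
        refine intervalIntegral.integral_congr fun θ _ => ?_
        simp only [hb _ (circleMap_mem_sphere 0 zero_le_one θ)]
        ring
    _ = ((∫ x in Disk, laplacian u x) + 4 * π) / 2 := by
        rw [intervalIntegral.integral_div,
          intervalIntegral.integral_add (hcont.intervalIntegrable _ _) intervalIntegrable_const,
          Disk, integral_closedBall_laplacian hu zero_le_one]
        simp only [one_mul, intervalIntegral.integral_const, smul_eq_mul]
        ring
    _ = 2 * π - ∫ x in Disk, K x * Real.exp (u x) := by
        rw [hdisk]; ring

theorem SolvesPrescribed.solvesSystem (hX : MemX K h u) (hs : SolvesPrescribed K h u) :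
    SolvesSystem K h u (∫ x in Disk, K x * Real.exp (u x)) := by
  have hB := hs.integral_boundary_eq
  obtain ⟨hu, hd, hb⟩ := hs
  obtain ⟨hA, hBpos⟩ := hX
  rw [hB] at hBpos
  refine ⟨hu, fun x hx => ?_, fun x hx => ?_, by rw [hB], hA, by linarith⟩
  · rw [hd x hx]; field_simp
  · rw [hb x hx, hB]; field_simp

theorem SolvesSystem.solvesPrescribed_add_log {ρ : ℝ} (hX : MemX K h u)
    (hs : SolvesSystem K h u ρ) :
    SolvesPrescribed K h
      (fun x => u x + (Real.log ρ - Real.log (∫ y in Disk, K y * Real.exp (u y)))) := by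
  obtain ⟨hA, hB⟩ := hX
  obtain ⟨hu, hd, hb, hratio, hρ, hρπ⟩ := hs
  set A := ∫ y in Disk, K y * Real.exp (u y)
  set B := ∫ y in Circ, h y * Real.exp (u y / 2) ∂arcLength
  set C := Real.log ρ - Real.log A
  have hexp : Real.exp C = ρ / A := by rw [Real.exp_sub, Real.exp_log hρ, Real.exp_log hA]
  have hexp_half : Real.exp (C / 2) = (2 * π - ρ) / B := by
    refine (sq_eq_sq₀ (Real.exp_pos _).le (div_pos (by linarith) hB).le).1 ?_
    rw [sq, ← Real.exp_add, add_halves, hexp, div_pow]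
    field_simp at hratio ⊢
    linarith
  refine ⟨hu.add contDiff_const, fun x hx => ?_, fun x hx => ?_⟩
  · rw [laplacian_add_const, hd x hx, Real.exp_add, hexp]
    field_simp
  · rw [fderiv_add_const, hb x hx, add_div, Real.exp_add, hexp_half]
    field_simp

end Curvature

theorem problems_equivalent_general
    (K h : ℂ → ℝ) :
    (∀ u : ℂ → ℝ, MemX K h u →
        (SolvesPrescribed K h u ↔
          SolvesSystem K h u (∫ x in Disk, K x * Real.exp (u x)))) ∧
    (∀ (u : ℂ → ℝ) (ρ : ℝ), MemX K h u → SolvesSystem K h u ρ →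
        SolvesPrescribed K h
          (fun x => u x +
            (Real.log ρ - Real.log (∫ y in Disk, K y * Real.exp (u y))))) :=
  ⟨fun _ hX => ⟨(·.solvesSystem hX), fun hs => by simpa using hs.solvesPrescribed_add_log hX⟩,
    fun _ _ hX hs => hs.solvesPrescribed_add_log hX⟩

/-- **Lemma 2.2.** Problems (1.3) and (1.4) are equivalent: a function `u ∈ 𝕏` solves the
original problem iff `(u, ρ)` with `ρ = ∫_{𝔻²} K e^u` solves the system; conversely, if
`(u, ρ)` with `u ∈ 𝕏` solves the system, then `u + C` with
`C = log ρ − log ∫_{𝔻²} K e^u` solves the original problem. -/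
theorem problems_equivalent
    (K h : ℂ → ℝ) (hK : ContinuousOn K Disk) (hh : ContinuousOn h Circ) :
    (∀ u : ℂ → ℝ, MemX K h u →
        (SolvesPrescribed K h u ↔
          SolvesSystem K h u (∫ x in Disk, K x * Real.exp (u x)))) ∧
    (∀ (u : ℂ → ℝ) (ρ : ℝ), MemX K h u → SolvesSystem K h u ρ →
        SolvesPrescribed K h
          (fun x => u x +
            (Real.log ρ - Real.log (∫ y in Disk, K y * Real.exp (u y))))) :=
  problems_equivalent_general K h
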